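/- arXiv:2402.05831 — 3 statements merged into one kernel-verified Lean document; each statement's English description precedes it below -/
import Mathlib

section
/- Let a > 1 and b ∈ ℝ with 0 < |b| < 1/3. Then the function p(θ) defined by 2π p(θ) = -1 + 2(a-1) ∫₀¹ e^{-bu cos θ} cos(bu sin θ) (1-u)^{a-2} du is strictly positive for all θ ∈ [0, 2π]. -/
open Real intervalIntegral

lemma exp_third_lt : Real.exp (1/3) < 17/9 := by
  have h3 : Real.exp (1/3) ^ 3 = Real.exp 1 := by
    rw [← Real.exp_nat_mul]; norm_num
  have h : Real.exp 1 < (17/9 : ℝ)^3 := by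
    calc Real.exp 1 < 2.7182818286 := Real.exp_one_lt_d9
    _ < (17/9:ℝ)^3 := by norm_num
  have := lt_of_pow_lt_pow_left₀ 3 (by norm_num) (h3 ▸ h)
  exact this

lemma key_num : (1:ℝ) < 2 * (Real.exp (-(1/3)) * Real.cos (1/3)) := by
  have hc : (17/18 : ℝ) ≤ Real.cos (1/3) := by
    have := Real.one_sub_sq_div_two_le_cos (x := 1/3)
    nlinarith
  have he : Real.exp (-(1/3)) > 9/17 := by
    rw [Real.exp_neg]
    rw [gt_iff_lt, lt_inv_comm₀ (by norm_num) (Real.exp_pos _)]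
    simpa using exp_third_lt
  nlinarith [Real.exp_pos (-(1/3:ℝ))]

theorem weight_positive (a b : ℝ) (ha : 1 < a) (hb0 : 0 < |b|) (hb : |b| < 1/3)
    (p : ℝ → ℝ)
    (hp : ∀ θ : ℝ, 2 * Real.pi * p θ = -1 + 2 * (a - 1) * ∫ u in (0:ℝ)..1,
        Real.exp (-(b * u * Real.cos θ)) * Real.cos (b * u * Real.sin θ) * (1 - u) ^ (a - 2)) :
    ∀ θ ∈ Set.Icc 0 (2 * Real.pi), 0 < p θ := by
  intro θ _
  set c : ℝ := Real.exp (-(1/3)) * Real.cos (1/3) with hc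
  have ha1 : (0:ℝ) < a - 1 := by linarith
  have hr : (-1:ℝ) < a - 2 := by linarith
  -- integrability of (1-u)^(a-2)
  have hg : IntervalIntegrable (fun u : ℝ => (1 - u) ^ (a-2)) MeasureTheory.volume 0 1 := by
    have := ((intervalIntegrable_rpow' hr (a := 0) (b := 1)).comp_sub_left 1).symm
    simpa using this
  have hf : IntervalIntegrable (fun u : ℝ =>
      Real.exp (-(b * u * Real.cos θ)) * Real.cos (b * u * Real.sin θ) * (1 - u) ^ (a-2))
      MeasureTheory.volume 0 1 := by
    have : IntervalIntegrable (fun u : ℝ =>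
        (Real.exp (-(b * u * Real.cos θ)) * Real.cos (b * u * Real.sin θ)) * (1 - u) ^ (a-2))
        MeasureTheory.volume 0 1 := by
      apply hg.continuousOn_mul
      fun_prop
    simpa [mul_assoc] using this
  -- pointwise bound
  have hbound : ∀ u ∈ Set.Icc (0:ℝ) 1,
      c * (1 - u) ^ (a-2) ≤
      Real.exp (-(b * u * Real.cos θ)) * Real.cos (b * u * Real.sin θ) * (1 - u) ^ (a-2) := by
    intro u hu
    obtain ⟨hu0, hu1⟩ := hu
    have hpow : (0:ℝ) ≤ (1 - u) ^ (a-2) := Real.rpow_nonneg (by linarith) _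
    have habs : ∀ x : ℝ, |x| ≤ 1 → |b * u * x| ≤ 1/3 := by
      intro x hx
      have : |b * u * x| = |b| * u * |x| := by
        rw [abs_mul, abs_mul, abs_of_nonneg hu0]
      rw [this]
      have h1 : |b| * u ≤ |b| := by nlinarith [abs_nonneg b]
      have h2 : |b| * u * |x| ≤ |b| * u := by
        nlinarith [mul_nonneg (abs_nonneg b) hu0, abs_nonneg x]
      linarith
    have h1 : Real.exp (-(1/3)) ≤ Real.exp (-(b * u * Real.cos θ)) := by
      apply Real.exp_le_exp.2
      have := habs (Real.cos θ) (Real.abs_cos_le_one θ)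
      have := abs_le.1 this
      linarith [this.2]
    have h2 : Real.cos (1/3) ≤ Real.cos (b * u * Real.sin θ) := by
      rw [← Real.cos_abs (b * u * Real.sin θ)]
      apply Real.cos_le_cos_of_nonneg_of_le_pi (abs_nonneg _)
        (by linarith [Real.pi_gt_three])
      exact habs (Real.sin θ) (Real.abs_sin_le_one θ)
    have hcos13 : (0:ℝ) ≤ Real.cos (1/3) := by
      apply Real.cos_nonneg_of_mem_Icc
      constructor <;> nlinarith [Real.pi_gt_three]
    have : c ≤ Real.exp (-(b * u * Real.cos θ)) * Real.cos (b * u * Real.sin θ) :=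
      mul_le_mul h1 h2 hcos13 (Real.exp_pos _).le
    exact mul_le_mul_of_nonneg_right this hpow
  -- integral of the lower bound
  have hint : (∫ u in (0:ℝ)..1, (1 - u) ^ (a-2)) = 1 / (a - 1) := by
    have h1 : (∫ u in (0:ℝ)..1, (1 - u) ^ (a-2)) = ∫ x in (0:ℝ)..1, x ^ (a-2) := by
      have := intervalIntegral.integral_comp_sub_left (a := (0:ℝ)) (b := 1)
        (fun x : ℝ => x ^ (a-2)) 1
      simpa using this
    rw [h1, integral_rpow (Or.inl hr)]
    rw [Real.one_rpow, Real.zero_rpow (by linarith)]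
    ring_nf
  have hmono := intervalIntegral.integral_mono_on (by norm_num : (0:ℝ) ≤ 1)
    (hg.const_mul c) hf hbound
  rw [intervalIntegral.integral_const_mul, hint] at hmono
  have hI : c * (1 / (a-1)) ≤ ∫ u in (0:ℝ)..1,
      Real.exp (-(b * u * Real.cos θ)) * Real.cos (b * u * Real.sin θ) * (1 - u) ^ (a-2) := hmono
  have hkey := key_num
  have hpθ := hp θ
  have h2 : (0:ℝ) < 2 * Real.pi * p θ := by
    rw [hpθ]
    have : 2 * (a-1) * (c * (1/(a-1))) = 2 * c := by field_simp
    nlinarith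
  nlinarith [Real.pi_pos]
end

section
/- Let a > 1 and b ∈ ℝ \ {0}. The weight p(θ) defined by 2π p(θ) = -1 + 2(a-1) ∫₀¹ e^{-bu cos θ} cos(bu sin θ) (1-u)^{a-2} du admits the uniformly convergent Fourier-type expansion 2π p(θ) = -1 + Σ_{j≥0} (-b)^j/(a)_j e^{ijθ} + Σ_{k≥0} (-b)^k/(a)_k e^{-ikθ}. -/
open MeasureTheory Filter Finset Complex Nat

namespace WFA

noncomputable def P (a : ℝ) (j : ℕ) : ℝ := ∏ i ∈ Finset.range j, (a + i)

lemma P_cast (a : ℝ) (j : ℕ) : ((P a j : ℝ) : ℂ) = ∏ i ∈ Finset.range j, ((a : ℂ) + i) := by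
  unfold P; push_cast; rfl

lemma P_pos {a : ℝ} (ha : 1 < a) (j : ℕ) : 0 < P a j :=
  Finset.prod_pos fun i _ => by have : (0:ℝ) ≤ i := Nat.cast_nonneg i; linarith

lemma factorial_le_P {a : ℝ} (ha : 1 < a) (j : ℕ) : (j ! : ℝ) ≤ P a j := by
  induction j with
  | zero => simp [P]
  | succ j ih =>
    rw [P, Finset.prod_range_succ, ← P]
    have h1 : ((j+1 : ℕ) : ℝ) ≤ a + j := by push_cast; linarith
    calc ((j+1)! : ℝ) = (j ! : ℝ) * ((j+1 : ℕ) : ℝ) := by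
          rw [Nat.factorial_succ]; push_cast; ring
      _ ≤ P a j * (a + j) := by
          apply mul_le_mul ih h1 (by positivity) (le_of_lt (P_pos ha j))

lemma rpow_intInt {a : ℝ} (ha : 1 < a) :
    IntervalIntegrable (fun u : ℝ => (1 - u) ^ (a - 2)) volume 0 1 := by
  have h := (intervalIntegral.intervalIntegrable_rpow' (a := 0) (b := 1) (r := a - 2)
    (by linarith)).comp_sub_left 1
  simpa using h.symm

lemma rpow_integrableOn {a : ℝ} (ha : 1 < a) :
    IntegrableOn (fun u : ℝ => (1 - u) ^ (a - 2)) (Set.Ioc 0 1) volume := by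
  have := rpow_intInt ha
  rwa [intervalIntegrable_iff_integrableOn_Ioc_of_le zero_le_one] at this

lemma mul_integrableOn {a : ℝ} (ha : 1 < a) {f : ℝ → ℂ} (hf : Continuous f) {C : ℝ}
    (hC : ∀ x ∈ Set.Ioc (0:ℝ) 1, ‖f x‖ ≤ C) :
    IntegrableOn (fun u : ℝ => f u * (((1 - u) ^ (a - 2) : ℝ) : ℂ)) (Set.Ioc 0 1) volume := by
  apply Integrable.bdd_mul ((rpow_integrableOn ha).ofReal) hf.aestronglyMeasurable.restrict
  rw [ae_restrict_iff' measurableSet_Ioc]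
  exact Eventually.of_forall hC


lemma Gamma_add_nat {a : ℝ} (ha : 1 < a) (j : ℕ) :
    Complex.Gamma ((a : ℂ) + j) = Complex.Gamma (a : ℂ) * ((P a j : ℝ) : ℂ) := by
  induction j with
  | zero => simp [P]
  | succ j ih =>
    have hne : ((a : ℂ) + j) ≠ 0 := by
      intro h
      have := congrArg Complex.re h
      simp at this
      have : (0:ℝ) ≤ (j:ℝ) := Nat.cast_nonneg j
      linarith
    have harg : (a : ℂ) + (j+1 : ℕ) = ((a : ℂ) + j) + 1 := by push_cast; ring
    rw [harg, Complex.Gamma_add_one _ hne, ih]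
    simp only [P, Finset.prod_range_succ]
    push_cast
    ring

lemma beta_eval {a : ℝ} (ha : 1 < a) (j : ℕ) :
    (a - 1) * ∫ u in (0:ℝ)..1, u ^ j * (1 - u) ^ (a - 2) = (j ! : ℝ) / P a j := by
  have h1 : Complex.betaIntegral ((j : ℂ) + 1) ((a : ℂ) - 1) =
      (((∫ u in (0:ℝ)..1, u ^ j * (1 - u) ^ (a - 2)) : ℝ) : ℂ) := by
    rw [Complex.betaIntegral, ← intervalIntegral.integral_ofReal]
    apply intervalIntegral.integral_congr
    intro x hx
    rw [Set.uIcc_of_le zero_le_one] at hx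
    obtain ⟨hx0, hx1⟩ := hx
    have e1 : ((j : ℂ) + 1 - 1) = ((j : ℕ) : ℂ) := by ring
    have e2 : ((a : ℂ) - 1 - 1) = (((a - 2 : ℝ)) : ℂ) := by push_cast; ring
    simp only [e1, e2]
    have e3 : ((1:ℂ) - (x:ℂ)) = (((1 - x : ℝ)) : ℂ) := by push_cast; ring
    rw [Complex.cpow_natCast, e3, ← Complex.ofReal_cpow (show (0:ℝ) ≤ 1 - x by linarith)]
    push_cast
    ring
  have hre1 : 0 < Complex.re ((j : ℂ) + 1) := by simp; positivity
  have hre2 : 0 < Complex.re ((a : ℂ) - 1) := by simp [Complex.sub_re]; linarith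
  have hB := Complex.Gamma_mul_Gamma_eq_betaIntegral hre1 hre2
  have harg : ((j : ℂ) + 1 + ((a : ℂ) - 1)) = (a : ℂ) + j := by ring
  rw [harg, Complex.Gamma_nat_eq_factorial, Gamma_add_nat ha, h1] at hB
  have hGa1 : Complex.Gamma ((a:ℂ) - 1) ≠ 0 :=
    Complex.Gamma_ne_zero_of_re_pos hre2
  have hGa : Complex.Gamma (a : ℂ) = ((a : ℂ) - 1) * Complex.Gamma ((a : ℂ) - 1) := by
    have h := Complex.Gamma_add_one ((a : ℂ) - 1) (by
      intro h; have := congrArg Complex.re h; simp [Complex.sub_re] at this; linarith)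
    simpa using h
  have hPne : ((P a j : ℝ) : ℂ) ≠ 0 := by
    simp only [ne_eq, Complex.ofReal_eq_zero]
    exact ne_of_gt (P_pos ha j)
  rw [hGa] at hB
  -- hB : (j! : ℂ) * Γ(a-1) = ((a-1) * Γ(a-1)) * P * ∫
  have key : (((a : ℝ) - 1 : ℝ) : ℂ) * (((∫ u in (0:ℝ)..1, u ^ j * (1 - u) ^ (a - 2)) : ℝ) : ℂ)
      = ((((j ! : ℝ) / P a j) : ℝ) : ℂ) := by
    push_cast
    rw [eq_div_iff hPne]
    apply mul_right_cancel₀ hGa1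
    linear_combination -hB
  exact_mod_cast key


lemma ofReal_integral {X : Type*} [MeasurableSpace X] {μ : Measure X} (f : X → ℝ) :
    (((∫ x, f x ∂μ) : ℝ) : ℂ) = ∫ x, ((f x : ℝ) : ℂ) ∂μ := (integral_ofReal (𝕜 := ℂ)).symm

lemma series_eq {a : ℝ} (ha : 1 < a) (w : ℂ) :
    ((a : ℂ) - 1) * ∫ u in (0:ℝ)..1, Complex.exp (w * u) * (((1 - u) ^ (a - 2) : ℝ) : ℂ)
      = ∑' j : ℕ, w ^ j / ∏ i ∈ Finset.range j, ((a : ℂ) + i) := by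
  set μ := volume.restrict (Set.Ioc (0:ℝ) 1) with hμ
  set F : ℕ → ℝ → ℂ :=
    fun j u => (w * u) ^ j / (j ! : ℂ) * (((1 - u) ^ (a - 2) : ℝ) : ℂ) with hF
  have hFbound : ∀ (j : ℕ), ∀ x ∈ Set.Ioc (0:ℝ) 1,
      ‖(w * (x:ℂ)) ^ j / ((j ! : ℕ) : ℂ)‖ ≤ ‖w‖ ^ j / (j ! : ℝ) := by
    intro j x hx
    rw [norm_div, norm_pow, norm_mul, Complex.norm_natCast, Complex.norm_real,
      Real.norm_eq_abs, abs_of_pos hx.1]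
    have hj : (0:ℝ) < (j ! : ℝ) := by exact_mod_cast Nat.factorial_pos j
    have h2 : (‖w‖ * x) ^ j ≤ ‖w‖ ^ j :=
      pow_le_pow_left₀ (mul_nonneg (norm_nonneg w) hx.1.le)
        (mul_le_of_le_one_right (norm_nonneg w) hx.2) j
    exact (div_le_div_iff_of_pos_right hj).mpr h2
  have hFint : ∀ j, Integrable (F j) μ := fun j =>
    mul_integrableOn ha (by fun_prop) (hFbound j)
  set Creal : ℝ := ∫ u in Set.Ioc (0:ℝ) 1, (1 - u) ^ (a - 2) with hC
  have hnorm_le : ∀ j, (∫ u, ‖F j u‖ ∂μ) ≤ ‖w‖ ^ j / (j ! : ℝ) * Creal := by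
    intro j
    rw [hC, ← MeasureTheory.integral_const_mul]
    apply setIntegral_mono_on ((hFint j).norm)
      (((rpow_integrableOn ha).const_mul _)) measurableSet_Ioc
    intro x hx
    rw [hF]
    simp only [norm_mul, Complex.norm_real, Real.norm_eq_abs,
      _root_.abs_of_nonneg (Real.rpow_nonneg (by linarith [hx.2] : (0:ℝ) ≤ 1 - x) _)]
    exact mul_le_mul_of_nonneg_right (hFbound j x hx)
      (Real.rpow_nonneg (by linarith [hx.2]) _)
  have hsum : Summable fun j => ∫ u, ‖F j u‖ ∂μ :=
    Summable.of_nonneg_of_le (fun j => integral_nonneg fun u => norm_nonneg _) hnorm_le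
      ((Real.summable_pow_div_factorial ‖w‖).mul_right Creal)
  have hswap := MeasureTheory.integral_tsum_of_summable_integral_norm hFint hsum
  have hexp : (fun u : ℝ => ∑' j, F j u)
      = fun u : ℝ => Complex.exp (w * u) * (((1 - u) ^ (a - 2) : ℝ) : ℂ) := by
    funext u
    rw [hF]
    simp only
    rw [tsum_mul_right]
    congr 1
    rw [Complex.exp_eq_exp_ℂ, NormedSpace.exp_eq_tsum_div]
  rw [hexp] at hswap
  have hterm : ∀ j : ℕ, ∫ u, F j u ∂μ
      = w ^ j / (j ! : ℂ) * (((∫ u in (0:ℝ)..1, u ^ j * (1 - u) ^ (a - 2)) : ℝ) : ℂ) := by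
    intro j
    rw [intervalIntegral.integral_of_le zero_le_one,
      ofReal_integral, ← MeasureTheory.integral_const_mul]
    apply integral_congr_ae
    filter_upwards with u
    rw [hF]
    push_cast
    ring
  rw [intervalIntegral.integral_of_le zero_le_one, ← hμ, ← hswap, ← tsum_mul_left]
  apply tsum_congr
  intro j
  rw [hterm j, ← P_cast]
  have hbC := congrArg (Complex.ofReal) (beta_eval ha j)
  push_cast at hbC
  have hjne : ((j ! : ℕ) : ℂ) ≠ 0 := by
    exact_mod_cast Nat.cast_ne_zero.mpr (Nat.factorial_ne_zero j)
  have hPne : ((P a j : ℝ) : ℂ) ≠ 0 := by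
    simp only [ne_eq, Complex.ofReal_eq_zero]
    exact ne_of_gt (P_pos ha j)
  set Bc : ℂ := ((∫ u in (0:ℝ)..1, u ^ j * (1 - u) ^ (a - 2) : ℝ) : ℂ) with hBc
  calc ((a:ℂ) - 1) * (w ^ j / ((j ! : ℕ) : ℂ) * Bc)
      = w ^ j / ((j ! : ℕ) : ℂ) * (((a:ℂ) - 1) * Bc) := by ring
    _ = w ^ j / ((j ! : ℕ) : ℂ) * (((j ! : ℕ) : ℂ) / ((P a j : ℝ) : ℂ)) := by rw [← hbC]
    _ = w ^ j / ((P a j : ℝ) : ℂ) := by field_simp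

lemma ofReal_intervalIntegral (f : ℝ → ℝ) (c d : ℝ) :
    (((∫ x in c..d, f x) : ℝ) : ℂ) = ∫ x in c..d, ((f x : ℝ) : ℂ) :=
  (intervalIntegral.integral_ofReal).symm

lemma exp_intInt {a : ℝ} (ha : 1 < a) (w : ℂ) :
    IntervalIntegrable (fun u : ℝ => Complex.exp (w * u) * (((1 - u) ^ (a - 2) : ℝ) : ℂ))
      volume 0 1 := by
  rw [intervalIntegrable_iff_integrableOn_Ioc_of_le zero_le_one]
  apply mul_integrableOn ha (by fun_prop) (C := Real.exp ‖w‖)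
  intro x hx
  rw [Complex.norm_exp]
  apply Real.exp_le_exp.mpr
  calc (w * x).re ≤ ‖w * (x:ℂ)‖ := Complex.re_le_norm _
    _ = ‖w‖ * |x| := by rw [norm_mul, Complex.norm_real, Real.norm_eq_abs]
    _ ≤ ‖w‖ * 1 := by
        apply mul_le_mul_of_nonneg_left _ (norm_nonneg w)
        rw [_root_.abs_of_pos hx.1]; exact hx.2
    _ = ‖w‖ := mul_one _

lemma exp_add_exp (b θ u : ℝ) :
    Complex.exp ((-(b:ℂ) * Complex.exp ((θ:ℝ) * Complex.I)) * u)
      + Complex.exp ((-(b:ℂ) * Complex.exp (-((θ:ℝ) * Complex.I))) * u)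
    = ((2 * (Real.exp (-(b * u * Real.cos θ)) * Real.cos (b * u * Real.sin θ)) : ℝ) : ℂ) := by
  have harg : (-(b:ℂ) * Complex.exp ((θ:ℝ) * Complex.I)) * u
      = ((-(b * u * Real.cos θ) : ℝ) : ℂ) + ((-(b * u * Real.sin θ) : ℝ) : ℂ) * Complex.I := by
    rw [Complex.exp_mul_I, ← Complex.ofReal_cos, ← Complex.ofReal_sin]
    push_cast
    ring
  have harg' : (-(b:ℂ) * Complex.exp (-((θ:ℝ) * Complex.I))) * u
      = (starRingEnd ℂ) ((-(b:ℂ) * Complex.exp ((θ:ℝ) * Complex.I)) * u) := by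
    rw [map_mul, map_mul, ← Complex.exp_conj]
    simp [Complex.conj_ofReal]
  rw [harg', Complex.exp_conj, harg]
  rw [Complex.add_conj]
  congr 1
  rw [Complex.exp_re]
  simp [Real.cos_neg, Complex.cos_ofReal_re, Complex.sin_ofReal_re]


end WFA

/-- The weight `p(θ)` admits the Fourier-type expansion
`2π p(θ) = -1 + ∑_{j≥0} (-b)^j/(a)_j e^{ijθ} + ∑_{k≥0} (-b)^k/(a)_k e^{-ikθ}`,
and the partial sums converge uniformly on `[0, 2π]`. -/
theorem weight_fourier_expansion (a b : ℝ) (ha : 1 < a) (hb : b ≠ 0)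
    (p : ℝ → ℝ)
    (hp : ∀ θ : ℝ, 2 * Real.pi * p θ = -1 + 2 * (a - 1) * ∫ u in (0:ℝ)..1,
        Real.exp (-(b * u * Real.cos θ)) * Real.cos (b * u * Real.sin θ) * (1 - u) ^ (a - 2)) :
    (∀ θ : ℝ, ((2 * Real.pi * p θ : ℝ) : ℂ) =
      -1 + (∑' j : ℕ, (-(b : ℂ)) ^ j / (∏ i ∈ Finset.range j, ((a : ℂ) + i)) *
              Complex.exp (j * θ * Complex.I))
         + (∑' k : ℕ, (-(b : ℂ)) ^ k / (∏ i ∈ Finset.range k, ((a : ℂ) + i)) *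
              Complex.exp (-(k * θ * Complex.I)))) ∧
    TendstoUniformlyOn
      (fun N : ℕ => fun θ : ℝ =>
        -1 + (∑ j ∈ Finset.range N, (-(b : ℂ)) ^ j / (∏ i ∈ Finset.range j, ((a : ℂ) + i)) *
                Complex.exp (j * θ * Complex.I))
           + (∑ k ∈ Finset.range N, (-(b : ℂ)) ^ k / (∏ i ∈ Finset.range k, ((a : ℂ) + i)) *
                Complex.exp (-(k * θ * Complex.I))))
      (fun θ : ℝ => ((2 * Real.pi * p θ : ℝ) : ℂ))
      Filter.atTop (Set.Icc 0 (2 * Real.pi)) := by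
  have key : ∀ θ : ℝ, ((2 * Real.pi * p θ : ℝ) : ℂ) =
      -1 + (∑' j : ℕ, (-(b : ℂ)) ^ j / (∏ i ∈ Finset.range j, ((a : ℂ) + i)) *
              Complex.exp (j * θ * Complex.I))
         + (∑' k : ℕ, (-(b : ℂ)) ^ k / (∏ i ∈ Finset.range k, ((a : ℂ) + i)) *
              Complex.exp (-(k * θ * Complex.I))) := by
    intro θ
    set w : ℂ := -(b:ℂ) * Complex.exp ((θ:ℝ) * Complex.I) with hw
    set w' : ℂ := -(b:ℂ) * Complex.exp (-((θ:ℝ) * Complex.I)) with hw'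
    have hpt : ∀ u : ℝ,
        Complex.exp (w * u) * (((1 - u) ^ (a - 2) : ℝ) : ℂ)
          + Complex.exp (w' * u) * (((1 - u) ^ (a - 2) : ℝ) : ℂ)
        = ((2 * (Real.exp (-(b * u * Real.cos θ)) * Real.cos (b * u * Real.sin θ)
            * (1 - u) ^ (a - 2)) : ℝ) : ℂ) := by
      intro u
      rw [← add_mul, hw, hw', WFA.exp_add_exp]
      push_cast
      ring
    have h2I : ((2 * (a-1) * ∫ u in (0:ℝ)..1,
        Real.exp (-(b * u * Real.cos θ)) * Real.cos (b * u * Real.sin θ) * (1 - u) ^ (a - 2) : ℝ) : ℂ)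
        = ((a:ℂ) - 1) * (∫ u in (0:ℝ)..1, Complex.exp (w * u) * (((1 - u) ^ (a - 2) : ℝ) : ℂ))
          + ((a:ℂ) - 1) * (∫ u in (0:ℝ)..1, Complex.exp (w' * u) * (((1 - u) ^ (a - 2) : ℝ) : ℂ)) := by
      rw [← mul_add, ← intervalIntegral.integral_add (WFA.exp_intInt ha w) (WFA.exp_intInt ha w')]
      rw [intervalIntegral.integral_congr (g := fun u : ℝ =>
        ((2 * (Real.exp (-(b * u * Real.cos θ)) * Real.cos (b * u * Real.sin θ)
            * (1 - u) ^ (a - 2)) : ℝ) : ℂ)) (fun u _ => hpt u)]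
      rw [← WFA.ofReal_intervalIntegral]
      rw [intervalIntegral.integral_const_mul]
      push_cast
      ring
    have hS : (∑' j : ℕ, w ^ j / ∏ i ∈ Finset.range j, ((a:ℂ) + i))
        = ∑' j : ℕ, (-(b : ℂ)) ^ j / (∏ i ∈ Finset.range j, ((a : ℂ) + i)) *
            Complex.exp (j * θ * Complex.I) := by
      apply tsum_congr
      intro j
      rw [hw, mul_pow, ← Complex.exp_nat_mul,
        show ((j:ℂ) * ((θ:ℝ) * Complex.I)) = ((j:ℂ) * (θ:ℂ) * Complex.I) from by ring,
        mul_div_right_comm]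
    have hT : (∑' k : ℕ, w' ^ k / ∏ i ∈ Finset.range k, ((a:ℂ) + i))
        = ∑' k : ℕ, (-(b : ℂ)) ^ k / (∏ i ∈ Finset.range k, ((a : ℂ) + i)) *
            Complex.exp (-((k:ℂ) * θ * Complex.I)) := by
      apply tsum_congr
      intro k
      rw [hw', mul_pow, ← Complex.exp_nat_mul,
        show ((k:ℂ) * (-((θ:ℝ) * Complex.I))) = -((k:ℂ) * (θ:ℂ) * Complex.I) from by ring,
        mul_div_right_comm]
    rw [hp θ, Complex.ofReal_add, h2I, WFA.series_eq ha w, WFA.series_eq ha w', hS, hT]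
    push_cast
    ring
  refine ⟨key, ?_⟩
  have hE1 : ∀ (j : ℕ) (t : ℝ), ‖Complex.exp ((j:ℂ) * (t:ℂ) * Complex.I)‖ = 1 := by
    intro j t
    rw [show ((j:ℂ) * (t:ℂ) * Complex.I) = (((j * t : ℝ)):ℂ) * Complex.I from by push_cast; ring,
      Complex.norm_exp_ofReal_mul_I]
  have hE2 : ∀ (j : ℕ) (t : ℝ), ‖Complex.exp (-((j:ℂ) * (t:ℂ) * Complex.I))‖ = 1 := by
    intro j t
    rw [show (-((j:ℂ) * (t:ℂ) * Complex.I)) = (((-(j * t) : ℝ)):ℂ) * Complex.I from by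
        push_cast; ring,
      Complex.norm_exp_ofReal_mul_I]
  have hbound : ∀ (j : ℕ) (E : ℂ), ‖E‖ = 1 →
      ‖(-(b : ℂ)) ^ j / (∏ i ∈ Finset.range j, ((a : ℂ) + i)) * E‖ ≤ |b| ^ j / (j ! : ℝ) := by
    intro j E hE
    rw [norm_mul, hE, mul_one, norm_div, norm_pow, norm_neg, Complex.norm_real,
      Real.norm_eq_abs, ← WFA.P_cast, Complex.norm_real, Real.norm_eq_abs,
      _root_.abs_of_pos (WFA.P_pos ha j)]
    have hj : (0:ℝ) < (j ! : ℝ) := by exact_mod_cast Nat.factorial_pos j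
    exact div_le_div_of_nonneg_left (by positivity) hj (WFA.factorial_le_P ha j)
  have HU1 := tendstoUniformlyOn_tsum_nat (u := fun j => |b| ^ j / (j ! : ℝ))
    (Real.summable_pow_div_factorial |b|) (s := Set.Icc 0 (2 * Real.pi))
    (f := fun (j : ℕ) (t : ℝ) => (-(b : ℂ)) ^ j / (∏ i ∈ Finset.range j, ((a : ℂ) + i)) *
      Complex.exp (j * t * Complex.I))
    (fun j t _ => hbound j _ (hE1 j t))
  have HU2 := tendstoUniformlyOn_tsum_nat (u := fun j => |b| ^ j / (j ! : ℝ))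
    (Real.summable_pow_div_factorial |b|) (s := Set.Icc 0 (2 * Real.pi))
    (f := fun (k : ℕ) (t : ℝ) => (-(b : ℂ)) ^ k / (∏ i ∈ Finset.range k, ((a : ℂ) + i)) *
      Complex.exp (-(k * t * Complex.I)))
    (fun k t _ => hbound k _ (hE2 k t))
  have HC : TendstoUniformlyOn (fun _ : ℕ => fun _ : ℝ => (-1:ℂ)) (fun _ => (-1:ℂ))
      Filter.atTop (Set.Icc 0 (2 * Real.pi)) :=
    Filter.Tendsto.tendstoUniformlyOn_const tendsto_const_nhds _
  have H := (HC.add HU1).add HU2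
  have hfun : (fun θ : ℝ => ((2 * Real.pi * p θ : ℝ) : ℂ))
      = ((fun _ : ℝ => (-1:ℂ))
        + (fun t : ℝ => ∑' j : ℕ, (-(b : ℂ)) ^ j / (∏ i ∈ Finset.range j, ((a : ℂ) + i)) *
            Complex.exp (j * t * Complex.I))
        + (fun t : ℝ => ∑' k : ℕ, (-(b : ℂ)) ^ k / (∏ i ∈ Finset.range k, ((a : ℂ) + i)) *
            Complex.exp (-(k * t * Complex.I)))) := by
    funext t
    rw [key t]
    rfl
  rw [hfun]
  exact H
end

section
/- Let a > 1 and b ∈ ℝ \ {0}, and let p(θ) be the weight defined by 2π p(θ) = -1 + 2(a-1) ∫₀¹ e^{-bu cos θ} cos(bu sin θ) (1-u)^{a-2} du. Then for every n ∈ ℤ₊, the moment ∫₀^{2π} e^{inθ} p(θ) dθ equals (-b)^n / (a)_n. -/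
open MeasureTheory intervalIntegral Complex Real
open scoped ENNReal NNReal

lemma L1 (k : ℤ) : (∫ θ in (0:ℝ)..(2*Real.pi), Complex.exp (k * θ * Complex.I)) =
    if k = 0 then (2*Real.pi : ℂ) else 0 := by
  rcases eq_or_ne k 0 with hk | hk
  · simp [hk, two_mul, Real.pi_nonneg]
  · have h : ∀ θ : ℝ, ((k : ℂ) * θ * Complex.I) = ((k : ℂ) * Complex.I) * θ := by
      intro θ; ring
    simp_rw [h]
    rw [integral_exp_mul_complex (by simp [hk, Complex.ext_iff])]
    have : Complex.exp ((k : ℂ) * Complex.I * (2*Real.pi : ℝ)) = 1 := by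
      rw [show ((k:ℂ) * Complex.I * (2*Real.pi:ℝ)) = (k:ℂ) * (2*Real.pi*Complex.I) by push_cast; ring]
      exact Complex.exp_int_mul_two_pi_mul_I k
    push_cast at this ⊢; simp [this, hk]

lemma exp_tsum (z : ℂ) : Complex.exp z = ∑' j : ℕ, z^j / j.factorial := by
  rw [Complex.exp_eq_exp_ℂ, NormedSpace.exp_eq_tsum_div]

lemma L2 (r : ℝ) (n : ℕ) (ε : ℤ) :
    (∫ θ in (0:ℝ)..(2*Real.pi),
        Complex.exp (n * θ * Complex.I) * Complex.exp (-(r:ℂ) * Complex.exp (ε * θ * Complex.I))) =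
    ∑' j : ℕ, ((-(r:ℂ))^j / j.factorial) *
      (if (n:ℤ) + ε*j = 0 then (2*Real.pi:ℂ) else 0) := by
  set f : ℕ → ℝ → ℂ := fun j θ =>
    ((-(r:ℂ))^j / j.factorial) * Complex.exp ((((n:ℤ) + ε*j : ℤ) : ℂ) * θ * Complex.I) with hf
  have hpt : ∀ θ : ℝ, Complex.exp (n * θ * Complex.I) *
      Complex.exp (-(r:ℂ) * Complex.exp (ε * θ * Complex.I)) = ∑' j, f j θ := by
    intro θ
    rw [exp_tsum (-(r:ℂ) * Complex.exp ((ε:ℂ) * θ * Complex.I)), ← tsum_mul_left]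
    refine tsum_congr fun j => ?_
    rw [hf]
    simp only
    rw [show ((((n:ℤ)+ε*(j:ℤ) : ℤ)):ℂ) * θ * Complex.I
        = ((n:ℂ)*θ*Complex.I) + (j:ℕ)*((ε:ℂ)*(θ:ℂ)*Complex.I) by push_cast; ring,
      Complex.exp_add, Complex.exp_nat_mul, mul_pow]
    ring
  have hnorm : ∀ j θ, ‖f j θ‖ = |r|^j / j.factorial := by
    intro j θ
    rw [hf]
    simp only [norm_mul, Complex.norm_exp]
    have h0 : ((((n:ℤ) + ε*j : ℤ) : ℂ) * θ * Complex.I).re = 0 := by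
      simp [Complex.mul_re, Complex.mul_im]
    rw [h0, Real.exp_zero, mul_one, norm_div, norm_pow]
    simp [Complex.norm_real, Complex.norm_natCast]
  have hsummable : Summable (fun j : ℕ => |r|^j / (j.factorial : ℝ)) :=
    Real.summable_pow_div_factorial |r|
  rw [intervalIntegral.integral_of_le (by positivity : (0:ℝ) ≤ 2*Real.pi)]
  simp_rw [hpt]
  rw [MeasureTheory.integral_tsum]
  · refine tsum_congr fun j => ?_
    rw [hf]
    simp only
    rw [MeasureTheory.integral_const_mul, ← intervalIntegral.integral_of_le
      (by positivity : (0:ℝ) ≤ 2*Real.pi), L1]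
  · intro j
    exact Continuous.aestronglyMeasurable (by continuity)
  · rw [← lt_top_iff_ne_top]
    have hlint : ∀ j : ℕ, (∫⁻ θ in Set.Ioc (0:ℝ) (2*Real.pi), ‖f j θ‖₊)
        = (‖(|r|^j / (j.factorial:ℝ))‖₊ : ℝ≥0∞) * ENNReal.ofReal (2*Real.pi) := by
      intro j
      have h2 : ∀ θ : ℝ, (‖f j θ‖₊ : ℝ≥0∞) = ((‖(|r|^j / (j.factorial:ℝ))‖₊ : ℝ≥0) : ℝ≥0∞) := by
        intro θ
        congr 1
        refine NNReal.coe_injective ?_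
        rw [coe_nnnorm, coe_nnnorm, hnorm j θ, Real.norm_eq_abs,
          _root_.abs_of_nonneg (show (0:ℝ) ≤ |r|^j / j.factorial by positivity)]
      simp_rw [h2]
      rw [MeasureTheory.lintegral_const]
      simp [Real.volume_Ioc]
    simp only [enorm_eq_nnnorm]
    rw [tsum_congr hlint, ENNReal.tsum_mul_right]
    apply ENNReal.mul_lt_top
    · rw [lt_top_iff_ne_top]
      refine ENNReal.tsum_coe_ne_top_iff_summable.2 ?_
      rw [← NNReal.summable_coe]
      refine hsummable.congr fun j => ?_
      rw [coe_nnnorm, Real.norm_eq_abs, _root_.abs_of_nonneg (show (0:ℝ) ≤ |r|^j / j.factorial by positivity)]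
    · exact ENNReal.ofReal_lt_top

lemma hexp (a b : ℝ) : Complex.exp (↑a + ↑b * Complex.I)
    = ↑(Real.exp a) * (↑(Real.cos b) + ↑(Real.sin b) * Complex.I) := by
  rw [Complex.exp_add, Complex.exp_mul_I, ← Complex.ofReal_cos, ← Complex.ofReal_sin,
    ← Complex.ofReal_exp]

lemma keyNeg (r : ℝ) (n : ℕ) :
    (∫ θ in (0:ℝ)..(2*Real.pi),
        Complex.exp (n * θ * Complex.I) *
          Complex.exp (-(r:ℂ) * Complex.exp (((-1:ℤ):ℂ) * θ * Complex.I)))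
    = 2 * Real.pi * ((-(r:ℂ))^n / n.factorial) := by
  rw [L2 r n (-1)]
  rw [tsum_eq_single n (fun j hj => by
    have h : ¬((n:ℤ) + (-1)*j = 0) := by omega
    rw [if_neg h, mul_zero])]
  have : (n:ℤ) + (-1)*n = 0 := by ring
  simp [this]; ring

lemma keyPos (r : ℝ) (n : ℕ) :
    (∫ θ in (0:ℝ)..(2*Real.pi),
        Complex.exp (n * θ * Complex.I) *
          Complex.exp (-(r:ℂ) * Complex.exp (((1:ℤ):ℂ) * θ * Complex.I)))
    = if n = 0 then (2*Real.pi:ℂ) else 0 := by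
  rw [L2 r n 1]
  rw [tsum_eq_single 0 (fun j hj => by
    have h : ¬((n:ℤ) + 1*j = 0) := by omega
    rw [if_neg h, mul_zero])]
  rcases eq_or_ne n 0 with h | h <;> simp [h]

lemma thetaInt (r : ℝ) (n : ℕ) :
    (∫ θ in (0:ℝ)..(2*Real.pi), Complex.exp (n * θ * Complex.I) *
      ((Real.exp (-(r * Real.cos θ)) * Real.cos (r * Real.sin θ) : ℝ) : ℂ))
    = Real.pi * ((-(r:ℂ))^n / n.factorial) + (if n = 0 then (Real.pi:ℂ) else 0) := by
  have hpt : ∀ θ : ℝ, ((Real.exp (-(r * Real.cos θ)) * Real.cos (r * Real.sin θ) : ℝ) : ℂ)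
      = (Complex.exp (-(r:ℂ) * Complex.exp (((1:ℤ):ℂ) * θ * Complex.I))
        + Complex.exp (-(r:ℂ) * Complex.exp (((-1:ℤ):ℂ) * θ * Complex.I)))/2 := by
    intro θ
    have h1 : -(r:ℂ) * Complex.exp (((1:ℤ):ℂ) * θ * Complex.I)
        = ↑(-(r*Real.cos θ)) + ↑(-(r*Real.sin θ)) * Complex.I := by
      push_cast
      rw [one_mul, Complex.exp_mul_I, ← Complex.ofReal_cos, ← Complex.ofReal_sin]
      ring
    have h2 : -(r:ℂ) * Complex.exp (((-1:ℤ):ℂ) * θ * Complex.I)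
        = ↑(-(r*Real.cos θ)) + ↑(r*Real.sin θ) * Complex.I := by
      push_cast
      rw [show ((-1:ℂ) * θ * Complex.I) = (-(θ:ℂ)) * Complex.I by ring,
        Complex.exp_mul_I, Complex.cos_neg, Complex.sin_neg,
        ← Complex.ofReal_cos, ← Complex.ofReal_sin]
      ring
    rw [h1, h2, hexp, hexp, Real.cos_neg, Real.sin_neg]
    push_cast
    ring
  simp_rw [hpt, mul_div_assoc', mul_add]
  rw [intervalIntegral.integral_div, intervalIntegral.integral_add
    (Continuous.intervalIntegrable (by continuity) _ _)
    (Continuous.intervalIntegrable (by continuity) _ _),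
    keyPos, keyNeg]
  rcases eq_or_ne n 0 with h | h <;> simp [h] <;> ring

lemma betaAux (a : ℝ) (ha : 1 < a) (n : ℕ) :
    ((∫ u in (0:ℝ)..1, u^n * (1-u)^(a-2) : ℝ) : ℂ)
    = n.factorial / (((a:ℂ) - 1) * ∏ i ∈ Finset.range n, ((a:ℂ) + i)) := by
  have h1 : ((∫ u in (0:ℝ)..1, u^n * (1-u)^(a-2) : ℝ) : ℂ)
      = Complex.betaIntegral ((a:ℂ)-1) ((n:ℂ)+1) := by
    rw [← intervalIntegral.integral_ofReal, Complex.betaIntegral_symm, Complex.betaIntegral]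
    refine intervalIntegral.integral_congr fun x hx => ?_
    rw [Set.uIcc_of_le (by norm_num : (0:ℝ) ≤ 1)] at hx
    have hx1 : (0:ℝ) ≤ 1 - x := by linarith [hx.2]
    rw [show ((n:ℂ)+1-1) = (n:ℂ) by ring, Complex.cpow_natCast,
      show ((a:ℂ)-1-1) = ((a-2 : ℝ):ℂ) by push_cast; ring,
      show (1 - (x:ℂ)) = (((1-x : ℝ)):ℂ) by push_cast; ring,
      ← Complex.ofReal_cpow hx1]
    push_cast
    ring
  rw [h1, show ((n:ℂ)+1) = ((n:ℕ):ℂ)+1 by norm_num,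
    Complex.betaIntegral_eval_nat_add_one_right (by simp; linarith)]
  congr 1
  rw [Finset.prod_range_succ']
  have : ∀ i ∈ Finset.range n, ((a:ℂ) - 1 + ((i:ℕ)+1:ℕ)) = (a:ℂ) + i := by
    intro i _; push_cast; ring
  rw [Finset.prod_congr rfl this]
  simp [mul_comm]

set_option maxHeartbeats 2000000 in
/-- The moments of the weight `p(θ)` on the unit circle: `∫₀^{2π} e^{inθ} p(θ) dθ = (-b)ⁿ/(a)ₙ`. -/
theorem weight_moments (a b : ℝ) (ha : 1 < a) (hb : b ≠ 0)
    (p : ℝ → ℝ)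
    (hp : ∀ θ : ℝ, 2 * Real.pi * p θ = -1 + 2 * (a - 1) * ∫ u in (0:ℝ)..1,
        Real.exp (-(b * u * Real.cos θ)) * Real.cos (b * u * Real.sin θ) * (1 - u) ^ (a - 2)) :
    ∀ n : ℕ, ∫ θ in (0:ℝ)..(2 * Real.pi), Complex.exp (n * θ * Complex.I) * (p θ : ℂ) =
      (-(b : ℂ)) ^ n / (∏ i ∈ Finset.range n, ((a : ℂ) + i)) := by
  intro n
  have hpi : (0:ℝ) < 2 * Real.pi := by positivity
  set h : ℝ → ℝ → ℝ := fun θ u =>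
    Real.exp (-(b * u * Real.cos θ)) * Real.cos (b * u * Real.sin θ) * (1 - u) ^ (a - 2) with hh
  set F : ℝ → ℝ → ℂ := fun θ u => Complex.exp (n * θ * Complex.I) * ((h θ u : ℝ) : ℂ) with hF
  set Iθ : ℝ → ℝ := fun θ => ∫ u in (0:ℝ)..1, h θ u with hIθ
  have hEcont : Continuous fun θ : ℝ => Complex.exp ((n:ℂ) * θ * Complex.I) :=
    Complex.continuous_exp.comp ((continuous_const.mul Complex.continuous_ofReal).mul
      continuous_const)
  have hEnorm : ∀ θ : ℝ, ‖Complex.exp ((n:ℂ) * θ * Complex.I)‖ = 1 := by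
    intro θ
    rw [Complex.norm_exp]
    simp [Complex.mul_re, Complex.mul_im]
  -- rpow integrability
  have hrpow : IntervalIntegrable (fun u : ℝ => (1-u)^(a-2)) volume 0 1 := by
    have h0 := intervalIntegral.intervalIntegrable_rpow' (a := 0) (b := 1)
      (show (-1:ℝ) < a-2 by linarith)
    simpa using (h0.comp_sub_left 1).symm
  have hrpow' : IntegrableOn (fun u : ℝ => (1-u)^(a-2)) (Set.Ioc 0 1) volume :=
    (intervalIntegrable_iff_integrableOn_Ioc_of_le (by norm_num)).mp hrpow
  -- measurability of uncurried F
  have hmeas : AEStronglyMeasurable (Function.uncurry F)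
      ((volume.restrict (Set.Ioc (0:ℝ) (2*Real.pi))).prod (volume.restrict (Set.Ioc (0:ℝ) 1))) := by
    have h1 : Continuous (fun z : ℝ × ℝ => Complex.exp (n * z.1 * Complex.I) *
        ((Real.exp (-(b * z.2 * Real.cos z.1)) * Real.cos (b * z.2 * Real.sin z.1) : ℝ) : ℂ)) := by
      continuity
    have h2 : Measurable (fun z : ℝ × ℝ => (((1 - z.2) ^ (a-2) : ℝ) : ℂ)) :=
      Complex.measurable_ofReal.comp ((measurable_const.sub measurable_snd).pow_const (a-2))
    have heq : Function.uncurry F = fun z : ℝ × ℝ =>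
        (Complex.exp (n * z.1 * Complex.I) *
          ((Real.exp (-(b * z.2 * Real.cos z.1)) * Real.cos (b * z.2 * Real.sin z.1) : ℝ) : ℂ)) *
        (((1 - z.2) ^ (a-2) : ℝ) : ℂ) := by
      funext z
      simp only [Function.uncurry, hF, hh]
      push_cast
      ring
    rw [heq]
    exact (h1.measurable.mul h2).aestronglyMeasurable
  -- integrability on the product
  have hFint : Integrable (Function.uncurry F)
      ((volume.restrict (Set.Ioc (0:ℝ) (2*Real.pi))).prod (volume.restrict (Set.Ioc (0:ℝ) 1))) := by
    refine Integrable.mono' (g := fun z : ℝ × ℝ => Real.exp |b| * (1 - z.2)^(a-2))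
      ((integrable_const _).mul_prod hrpow') hmeas ?_
    rw [Measure.prod_restrict]
    filter_upwards [ae_restrict_mem (measurableSet_Ioc.prod measurableSet_Ioc)] with z hz
    obtain ⟨hz1, hz2⟩ := hz
    have hu0 : (0:ℝ) < z.2 := hz2.1
    have hu1 : z.2 ≤ 1 := hz2.2
    have h1u : (0:ℝ) ≤ 1 - z.2 := by linarith
    have hxle : -(b * z.2 * Real.cos z.1) ≤ |b| := by
      refine le_trans (neg_le_abs _) ?_
      rw [abs_mul, abs_mul]
      have hc := abs_cos_le_one z.1
      have hz2' : |z.2| ≤ 1 := abs_le.mpr ⟨by linarith, hu1⟩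
      calc |b| * |z.2| * |Real.cos z.1| ≤ |b| * |z.2| * 1 :=
            mul_le_mul_of_nonneg_left hc (by positivity)
        _ = |b| * |z.2| := mul_one _
        _ ≤ |b| * 1 := mul_le_mul_of_nonneg_left hz2' (abs_nonneg b)
        _ = |b| := mul_one _
    have hnorm : ‖Function.uncurry F z‖ = |h z.1 z.2| := by
      simp only [Function.uncurry, hF, norm_mul, Complex.norm_real, Real.norm_eq_abs]
      rw [hEnorm, one_mul]
    rw [hnorm, hh]
    simp only
    rw [abs_mul, abs_mul, _root_.abs_of_nonneg (Real.rpow_nonneg h1u _)]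
    have hec : |Real.exp (-(b * z.2 * Real.cos z.1))| * |Real.cos (b * z.2 * Real.sin z.1)|
        ≤ Real.exp |b| := by
      rw [_root_.abs_of_nonneg (Real.exp_nonneg _)]
      calc Real.exp (-(b * z.2 * Real.cos z.1)) * |Real.cos (b * z.2 * Real.sin z.1)|
          ≤ Real.exp (-(b * z.2 * Real.cos z.1)) * 1 :=
            mul_le_mul_of_nonneg_left (abs_cos_le_one _) (Real.exp_nonneg _)
        _ ≤ Real.exp |b| := by rw [mul_one]; exact Real.exp_le_exp.2 hxle
    exact mul_le_mul_of_nonneg_right hec (Real.rpow_nonneg h1u _)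
  -- E θ * Iθ θ as an inner integral of F
  have hinner : ∀ θ : ℝ, Complex.exp (n*θ*Complex.I) * ((Iθ θ : ℝ) : ℂ)
      = ∫ u in Set.Ioc (0:ℝ) 1, F θ u := by
    intro θ
    simp only [hF, hIθ]
    rw [← intervalIntegral.integral_ofReal (f := fun u => h θ u) (μ := volume),
      intervalIntegral.integral_of_le (by norm_num : (0:ℝ) ≤ 1),
      ← MeasureTheory.integral_const_mul]
  have hGint : IntervalIntegrable (fun θ => Complex.exp (n*θ*Complex.I) * ((Iθ θ : ℝ) : ℂ))
      volume 0 (2*Real.pi) := by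
    rw [intervalIntegrable_iff_integrableOn_Ioc_of_le hpi.le]
    have h0 := hFint.integral_prod_left
    simp only [Function.uncurry_apply_pair] at h0
    exact h0.congr (Filter.Eventually.of_forall fun θ => (hinner θ).symm)
  -- the inner θ-integral for each u
  have hthetaval : ∀ u : ℝ, (∫ θ in Set.Ioc (0:ℝ) (2*Real.pi), F θ u)
      = (Real.pi * ((-((b*u : ℝ):ℂ))^n / n.factorial) + (if n = 0 then (Real.pi:ℂ) else 0))
        * (((1-u)^(a-2) : ℝ) : ℂ) := by
    intro u
    rw [← intervalIntegral.integral_of_le hpi.le]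
    have hptu : ∀ θ : ℝ, F θ u = (Complex.exp (n*θ*Complex.I) *
        ((Real.exp (-(b*u*Real.cos θ)) * Real.cos (b*u*Real.sin θ) : ℝ) : ℂ))
        * (((1-u)^(a-2) : ℝ) : ℂ) := by
      intro θ
      rw [hF, hh]
      push_cast
      ring
    simp_rw [hptu]
    rw [intervalIntegral.integral_mul_const, thetaInt (b*u) n]
  -- the value of ∫ (1-u)^(a-2)
  have hbeta0 : ((∫ u in (0:ℝ)..1, (1-u)^(a-2) : ℝ) : ℂ) = 1/((a:ℂ)-1) := by
    have h0 := betaAux a ha 0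
    simp only [pow_zero, one_mul, Finset.range_zero, Finset.prod_empty, mul_one,
      Nat.factorial_zero, Nat.cast_one] at h0
    rw [h0]
  -- outer u-integral
  have houter : (∫ u in Set.Ioc (0:ℝ) 1, ∫ θ in Set.Ioc (0:ℝ) (2*Real.pi), F θ u)
      = (Real.pi * ((-(b:ℂ))^n / n.factorial)) *
          ((n.factorial : ℂ) / (((a:ℂ)-1) * ∏ i ∈ Finset.range n, ((a:ℂ)+i)))
        + (if n = 0 then (Real.pi:ℂ) else 0) * (1/((a:ℂ)-1)) := by
    simp_rw [hthetaval]
    rw [← intervalIntegral.integral_of_le (by norm_num : (0:ℝ) ≤ 1)]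
    have hsplit : ∀ u : ℝ, ((Real.pi : ℂ) * ((-((b*u : ℝ):ℂ))^n / n.factorial)
          + (if n = 0 then (Real.pi:ℂ) else 0)) * (((1-u)^(a-2) : ℝ) : ℂ)
        = (Real.pi * ((-(b:ℂ))^n / n.factorial)) * ((u^n * (1-u)^(a-2) : ℝ) : ℂ)
          + (if n = 0 then (Real.pi:ℂ) else 0) * (((1-u)^(a-2) : ℝ) : ℂ) := by
      intro u
      push_cast
      ring
    simp_rw [hsplit]
    have hi2 : IntervalIntegrable (fun u : ℝ => (((1-u)^(a-2) : ℝ) : ℂ)) volume 0 1 :=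
      ⟨hrpow.1.ofReal, hrpow.2.ofReal⟩
    have hi1r : IntervalIntegrable (fun u : ℝ => u^n * (1-u)^(a-2)) volume 0 1 :=
      hrpow.continuousOn_mul (continuous_pow n).continuousOn
    have hi1 : IntervalIntegrable (fun u : ℝ => ((u^n * (1-u)^(a-2) : ℝ) : ℂ)) volume 0 1 :=
      ⟨hi1r.1.ofReal, hi1r.2.ofReal⟩
    rw [intervalIntegral.integral_add (hi1.const_mul _) (hi2.const_mul _),
      intervalIntegral.integral_const_mul, intervalIntegral.integral_const_mul,
      intervalIntegral.integral_ofReal, intervalIntegral.integral_ofReal,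
      betaAux a ha n, hbeta0]
  -- value of ∫ E
  have hL1n : (∫ θ in (0:ℝ)..(2*Real.pi), Complex.exp ((n:ℂ)*θ*Complex.I))
      = if n = 0 then (2*Real.pi:ℂ) else 0 := by
    have h0 := L1 (n : ℤ)
    rw [show (((n:ℤ):ℂ)) = (n:ℂ) by push_cast; rfl] at h0
    rcases eq_or_ne n 0 with hn | hn
    · simpa [hn] using h0
    · have : ((n:ℤ)) ≠ 0 := by exact_mod_cast hn
      simpa [this, hn] using h0
  -- p in complex form
  have hpc : ∀ θ : ℝ, (p θ : ℂ) = (-1 + 2*((a:ℂ)-1) * ((Iθ θ : ℝ) : ℂ)) / (2*Real.pi) := by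
    intro θ
    have h0 := hp θ
    have hId : Iθ θ = ∫ u in (0:ℝ)..1,
        Real.exp (-(b * u * Real.cos θ)) * Real.cos (b * u * Real.sin θ) * (1 - u) ^ (a - 2) := rfl
    rw [← hId] at h0
    have h1 : p θ = (-1 + 2*(a-1) * Iθ θ) / (2*Real.pi) := by
      field_simp
      linarith [h0]
    rw [h1]
    push_cast
    ring
  -- value of ∫ G
  have hGval : (∫ θ in (0:ℝ)..(2*Real.pi), Complex.exp (n*θ*Complex.I) * ((Iθ θ : ℝ) : ℂ))
      = (Real.pi * ((-(b:ℂ))^n / n.factorial)) *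
          ((n.factorial : ℂ) / (((a:ℂ)-1) * ∏ i ∈ Finset.range n, ((a:ℂ)+i)))
        + (if n = 0 then (Real.pi:ℂ) else 0) * (1/((a:ℂ)-1)) := by
    rw [intervalIntegral.integral_of_le hpi.le]
    simp_rw [hinner]
    rw [MeasureTheory.integral_integral_swap hFint, houter]
  -- nonvanishing facts
  have hP : (∏ i ∈ Finset.range n, ((a:ℂ)+i)) ≠ 0 := by
    refine Finset.prod_ne_zero_iff.2 fun i _ => ?_
    rw [show ((a:ℂ) + i) = (((a + i : ℝ)) : ℂ) by push_cast; ring]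
    refine Complex.ofReal_ne_zero.2 (ne_of_gt ?_)
    have : (0:ℝ) ≤ (i:ℝ) := Nat.cast_nonneg i
    linarith
  have ha1 : ((a:ℂ)-1) ≠ 0 := by
    rw [show ((a:ℂ)-1) = (((a - 1 : ℝ)) : ℂ) by push_cast; ring]
    exact Complex.ofReal_ne_zero.2 (by linarith)
  have hπ : ((Real.pi : ℝ) : ℂ) ≠ 0 := Complex.ofReal_ne_zero.2 Real.pi_ne_zero
  have hfac : ((n.factorial : ℕ) : ℂ) ≠ 0 := Nat.cast_ne_zero.2 n.factorial_ne_zero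
  -- main computation
  calc ∫ θ in (0:ℝ)..(2*Real.pi), Complex.exp (n * θ * Complex.I) * (p θ : ℂ)
      = ∫ θ in (0:ℝ)..(2*Real.pi),
          (-(Complex.exp (n*θ*Complex.I)) + 2*((a:ℂ)-1) *
            (Complex.exp (n*θ*Complex.I) * ((Iθ θ : ℝ) : ℂ))) / (2*Real.pi) := by
        refine intervalIntegral.integral_congr fun θ _ => ?_
        rw [hpc θ]
        ring
    _ = ((-(if n = 0 then (2*Real.pi:ℂ) else 0)) + 2*((a:ℂ)-1) *
          ((Real.pi * ((-(b:ℂ))^n / n.factorial)) *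
            ((n.factorial : ℂ) / (((a:ℂ)-1) * ∏ i ∈ Finset.range n, ((a:ℂ)+i)))
          + (if n = 0 then (Real.pi:ℂ) else 0) * (1/((a:ℂ)-1)))) / (2*Real.pi) := by
        rw [intervalIntegral.integral_div, intervalIntegral.integral_add (f := fun θ : ℝ => -Complex.exp ((n:ℂ)*θ*Complex.I))
          (hEcont.neg.intervalIntegrable _ _)
          (hGint.const_mul _),
          intervalIntegral.integral_neg, hL1n, intervalIntegral.integral_const_mul, hGval]
    _ = (-(b : ℂ)) ^ n / (∏ i ∈ Finset.range n, ((a : ℂ) + i)) := by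
        rcases eq_or_ne n 0 with hn | hn
        · subst hn
          simp only [if_pos rfl, if_true, pow_zero, Nat.factorial_zero, Nat.cast_one,
            Finset.range_zero, Finset.prod_empty]
          field_simp
          ring
        · rw [if_neg hn, if_neg hn]
          field_simp
          ring
end
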